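/- Let H be a graph, e an edge of H, G a two-terminal graph, and p ∈ ℂ with R(G;p) ≠ 0. Then ((1-p)/R(G;p))·R(H(G)_e; p) = R(H;p) + (y_G(p) − (p+1))·R(H∖e;p), where y_G(p) = (1-p)S(G;p)/R(G;p) + 1. -/

import Mathlib

open scoped Classical

/-- A (multi)graph: a vertex type, a finite edge type, and an endpoint map
sending each edge to an unordered pair of vertices. -/
structure Multigraph where
  V : Type
  E : Type
  [fintE : Fintype E]
  ends : E → Sym2 V

attribute [instance] Multigraph.fintE

namespace Multigraph

/-- The simple graph on the vertices of `G` induced by a set `A` of edges: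
two distinct vertices are adjacent if some edge of `A` joins them. -/
def graphOf (G : Multigraph) (A : Finset G.E) : SimpleGraph G.V where
  Adj u v := u ≠ v ∧ ∃ e ∈ A, G.ends e = s(u, v)
  symm := by
    constructor
    rintro u v ⟨h, e, he, hev⟩
    exact ⟨h.symm, e, he, by rw [hev, Sym2.eq_swap]⟩
  loopless := by constructor; rintro v ⟨h, -⟩; exact h rfl

/-- The (all-terminal) reliability polynomial of `G`, evaluated at the edge
failure probability `p`. -/
noncomputable def rel (G : Multigraph) (p : ℂ) : ℂ :=
  ∑ A : Finset G.E,
    if (G.graphOf A).Connected then (1 - p) ^ A.card * p ^ (Fintype.card G.E - A.card) else 0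

end Multigraph

/-- A two-terminal graph: a multigraph together with two distinct distinguished
vertices, the source `s` and the sink `t`. -/
structure TTGraph extends Multigraph where
  s : V
  t : V
  hst : s ≠ t

namespace TTGraph

/-- The reliability polynomial of a two-terminal graph. -/
noncomputable def rel (G : TTGraph) (p : ℂ) : ℂ := G.toMultigraph.rel p

/-- `A` is an `s`–`t` split: every vertex is joined by a path (within `A`) to
exactly one of `s`, `t`. -/
def IsSplit (G : TTGraph) (A : Finset G.toMultigraph.E) : Prop :=
  ∀ v : G.V, Xor' ((G.toMultigraph.graphOf A).Reachable v G.s)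
    ((G.toMultigraph.graphOf A).Reachable v G.t)

/-- The split reliability polynomial of a two-terminal graph. -/
noncomputable def split (G : TTGraph) (p : ℂ) : ℂ :=
  ∑ A : Finset G.toMultigraph.E,
    if G.IsSplit A then (1 - p) ^ A.card * p ^ (Fintype.card G.toMultigraph.E - A.card) else 0

/-- The effective edge interaction `y_G(p)`. -/
noncomputable def yEff (G : TTGraph) (p : ℂ) : ℂ := (1 - p) * G.split p / G.rel p + 1

/-- The virtual edge interaction `ŷ_G(p)`. -/
noncomputable def yVirt (G : TTGraph) (p : ℂ) : ℂ := G.rel p / G.split p + 1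

/-- The identifications made in the parallel composition: the two sources are
identified and the two sinks are identified. -/
def parRel (G₁ G₂ : TTGraph) : (G₁.V ⊕ G₂.V) → (G₁.V ⊕ G₂.V) → Prop :=
  fun a b => (a = .inl G₁.s ∧ b = .inr G₂.s) ∨ (a = .inl G₁.t ∧ b = .inr G₂.t)

/-- The parallel composition `G₁ ∥ G₂` of two two-terminal graphs. -/
noncomputable def par (G₁ G₂ : TTGraph) : TTGraph where
  V := Quot (parRel G₁ G₂)
  E := G₁.toMultigraph.E ⊕ G₂.toMultigraph.E
  ends := Sum.elim (fun e => (G₁.ends e).map (Quot.mk _ ∘ Sum.inl))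
    (fun e => (G₂.ends e).map (Quot.mk _ ∘ Sum.inr))
  s := Quot.mk _ (.inl G₁.s)
  t := Quot.mk _ (.inl G₁.t)
  hst := by
    intro h
    have hresp : ∀ a b, parRel G₁ G₂ a b →
        (Sum.elim (fun v => v = G₁.t) (fun v => v = G₂.t) a : Prop) =
        (Sum.elim (fun v => v = G₁.t) (fun v => v = G₂.t) b : Prop) := by
      rintro a b (⟨rfl, rfl⟩ | ⟨rfl, rfl⟩) <;> simp [G₁.hst, G₂.hst]
    have := congrArg (Quot.lift _ hresp) h
    simp [G₁.hst] at this

/-- The identification made in the series composition: the sink of `G₁` is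
identified with the source of `G₂`. -/
def serRel (G₁ G₂ : TTGraph) : (G₁.V ⊕ G₂.V) → (G₁.V ⊕ G₂.V) → Prop :=
  fun a b => a = .inl G₁.t ∧ b = .inr G₂.s

/-- The series composition `G₁ ⋈ G₂` of two two-terminal graphs. -/
noncomputable def ser (G₁ G₂ : TTGraph) : TTGraph where
  V := Quot (serRel G₁ G₂)
  E := G₁.toMultigraph.E ⊕ G₂.toMultigraph.E
  ends := Sum.elim (fun e => (G₁.ends e).map (Quot.mk _ ∘ Sum.inl))
    (fun e => (G₂.ends e).map (Quot.mk _ ∘ Sum.inr))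
  s := Quot.mk _ (.inl G₁.s)
  t := Quot.mk _ (.inr G₂.t)
  hst := by
    intro h
    have hresp : ∀ a b, serRel G₁ G₂ a b →
        (Sum.elim (fun v => v = G₁.t) (fun _ => True) a : Prop) =
        (Sum.elim (fun v => v = G₁.t) (fun _ => True) b : Prop) := by
      rintro a b ⟨rfl, rfl⟩; simp
    have := congrArg (Quot.lift _ hresp) h
    simp [G₁.hst] at this

end TTGraph

namespace Multigraph

/-- Deletion of an edge. -/
noncomputable def delete (G : Multigraph) (e : G.E) : Multigraph where
  V := G.V
  E := {e' : G.E // e' ≠ e}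
  ends := fun e' => G.ends e'.1

/-- Contraction of an edge: its two endpoints are identified, and the edge is removed. -/
noncomputable def contract (G : Multigraph) (e : G.E) : Multigraph where
  V := Quot (fun a b => G.ends e = s(a, b))
  E := {e' : G.E // e' ≠ e}
  ends := fun e' => (G.ends e'.1).map (Quot.mk _)

end Multigraph

/-- The identifications for gluing a two-terminal graph `G` in place of an edge with
endpoints `u`, `v`: the source of `G` is identified with `u`, the sink with `v`. -/
def substRel (H : Multigraph) (u v : H.V) (G : TTGraph) :
    (H.V ⊕ G.V) → (H.V ⊕ G.V) → Prop :=
  fun a b => (a = .inl u ∧ b = .inr G.s) ∨ (a = .inl v ∧ b = .inr G.t)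

/-- The graph `H(G)_e` obtained from `H` by deleting the edge `e` (with endpoints
`u`, `v`) and gluing in a copy of `G`, identifying the source of `G` with `u`
and the sink of `G` with `v`. -/
noncomputable def Multigraph.substEdge (H : Multigraph) (e : H.E) (u v : H.V) (G : TTGraph) :
    Multigraph where
  V := Quot (substRel H u v G)
  E := {e' : H.E // e' ≠ e} ⊕ G.toMultigraph.E
  ends := Sum.elim (fun e' => (H.ends e'.1).map (Quot.mk _ ∘ Sum.inl))
    (fun f => (G.ends f).map (Quot.mk _ ∘ Sum.inr))

/-!
Split an edge set of `H(G)_e` into its parts `A₁ ⊆ E(H) ∖ e` and `A₂ ⊆ E(G)`. Since `s` is glued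
to `u` and `t` to `v`, the union is connected iff either `A₂` splits `G` into an `s`-part and a
`t`-part and `A₁` connects `H ∖ e`, or `A₂` connects `G` and `A₁` connects `H / e`; the two cases
exclude each other. The weights `(1-p)^|A| p^|E ∖ A|` are multiplicative over this split, so
`R(H(G)_e) = S(G) R(H ∖ e) + R(G) R(H / e)`, and deletion–contraction
`R(H) = p R(H ∖ e) + (1-p) R(H / e)` turns this into the claimed identity.

Connectivity is handled as "the equivalence relation generated by the edges is total": then the
quotients defining `H / e` and `H(G)_e` just add their identifications to the generating relation.
-/

open Relation

section Relations

variable {α β : Type*}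

def RelConnected (r : α → α → Prop) : Prop := ∀ a b, EqvGen r a b

theorem Relation.EqvGen.apply_of_equivalence {r : α → α → Prop} {s : β → β → Prop}
    (hs : Equivalence s) {f : α → β} (h : ∀ a b, r a b → s (f a) (f b)) {a b : α}
    (hab : EqvGen r a b) :
    s (f a) (f b) :=
  ((hs.comap f).eqvGen_iff).1 (EqvGen.mono h a b hab)

theorem Relation.EqvGen.map {r : α → α → Prop} {s : β → β → Prop} {f : α → β}
    (h : ∀ a b, r a b → s (f a) (f b)) {a b : α} (hab : EqvGen r a b) :
    EqvGen s (f a) (f b) :=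
  hab.apply_of_equivalence (EqvGen.is_equivalence s) fun a b hr => .rel _ _ (h a b hr)

theorem eqvGen_map_quot_mk_iff {r q : α → α → Prop} {x y : α} :
    EqvGen (Relation.Map q (Quot.mk r) (Quot.mk r)) (Quot.mk r x) (Quot.mk r y) ↔
      EqvGen (r ⊔ q) x y := by
  have out_rel : ∀ x, EqvGen (r ⊔ q) (Quot.mk r x).out x := fun x =>
    EqvGen.mono (fun _ _ => Or.inl) _ _ (Quot.eqvGen_exact (Quot.out_eq _))
  constructor
  · intro h
    have := h.apply_of_equivalence (f := Quot.out) (EqvGen.is_equivalence (r ⊔ q)) ?_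
    · exact ((out_rel x).symm _ _).trans _ _ _ (this.trans _ _ _ (out_rel y))
    rintro _ _ ⟨x', y', hq, rfl, rfl⟩
    exact ((out_rel x').trans _ _ _ (.rel _ _ (Or.inr hq))).trans _ _ _ ((out_rel y').symm _ _)
  · refine fun h => h.apply_of_equivalence (EqvGen.is_equivalence _) fun x' y' h' => ?_
    rcases h' with hr | hq
    · exact Quot.sound hr ▸ .refl _
    · exact .rel _ _ ⟨x', y', hq, rfl, rfl⟩

theorem relConnected_map_quot_mk_iff {r q : α → α → Prop} :
    RelConnected (Relation.Map q (Quot.mk r) (Quot.mk r)) ↔ RelConnected (r ⊔ q) := by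
  simp only [RelConnected, Quot.mk_surjective.forall₂, eqvGen_map_quot_mk_iff]

theorem Sym2.toRel_image_map (f : α → β) (S : Set (Sym2 α)) :
    Sym2.ToRel (Sym2.map f '' S) = Relation.Map (Sym2.ToRel S) f f := by
  ext a b
  simp only [Sym2.toRel_prop, Set.mem_image, Relation.Map]
  constructor
  · rintro ⟨z, hz, hza⟩
    induction z using Sym2.ind with
    | _ x y =>
      rcases Sym2.eq_iff.1 (by simpa using hza) with ⟨rfl, rfl⟩ | ⟨rfl, rfl⟩
      · exact ⟨x, y, hz, rfl, rfl⟩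
      · exact ⟨y, x, Sym2.eq_swap ▸ hz, rfl, rfl⟩
  · rintro ⟨x, y, hxy, rfl, rfl⟩
    exact ⟨s(x, y), hxy, rfl⟩

theorem Sym2.toRel_union (S T : Set (Sym2 α)) :
    Sym2.ToRel (S ∪ T) = Sym2.ToRel S ⊔ Sym2.ToRel T :=
  rfl

theorem Sym2.toRel_insert (z : Sym2 α) (S : Set (Sym2 α)) :
    Sym2.ToRel (insert z S) = (fun a b => z = s(a, b)) ⊔ Sym2.ToRel S := by
  ext a b
  simp [Sym2.toRel_prop, eq_comm]

theorem Relation.map_inl_sup_map_inr (r : α → α → Prop) (s : β → β → Prop) :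
    Relation.Map r Sum.inl Sum.inl ⊔ Relation.Map s Sum.inr Sum.inr = Sum.LiftRel r s := by
  ext (a | a) (b | b) <;> simp [Relation.Map]

end Relations

section Glue

variable {α β : Type*} {rH : α → α → Prop} {rG : β → β → Prop} {u v : α} {s t : β}

def glueRel (u v : α) (s t : β) : α ⊕ β → α ⊕ β → Prop :=
  fun a b => (a = .inl u ∧ b = .inr s) ∨ (a = .inl v ∧ b = .inr t)

local notation "R" => glueRel u v s t ⊔ Sum.LiftRel rH rG

theorem eqvGen_or_eqvGen_of_relConnected_glue (h : RelConnected R) (w : β) :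
    EqvGen rG w s ∨ EqvGen rG w t := by
  -- The vertices of `β` joined to `s` or `t`, together with all of `α`, form a union of classes.
  let reachesST : α ⊕ β → Prop :=
    Sum.elim (fun _ => True) fun z => EqvGen rG z s ∨ EqvGen rG z t
  have := (h (.inr w) (.inl u)).apply_of_equivalence (f := reachesST)
    ⟨Iff.refl, Iff.symm, Iff.trans⟩ ?_
  · simpa [reachesST] using this
  rintro _ _ ((⟨rfl, rfl⟩ | ⟨rfl, rfl⟩) | (⟨hxy⟩ | ⟨hxy⟩))
  · simpa [reachesST] using .inl (.refl _)
  · simpa [reachesST] using .inr (.refl _)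
  · simp [reachesST]
  · have hxy := EqvGen.rel _ _ hxy
    simp only [reachesST, Sum.elim_inr]
    exact ⟨.imp (hxy.symm.trans _ _ _ ·) (hxy.symm.trans _ _ _ ·),
      .imp (hxy.trans _ _ _ ·) (hxy.trans _ _ _ ·)⟩

theorem relConnected_of_relConnected_glue_of_not_eqvGen (h : RelConnected R)
    (hst : ¬EqvGen rG s t) : RelConnected rH := by
  -- Retract each vertex of `β` onto the terminal its class is glued to.
  let π : α ⊕ β → α := Sum.elim id fun w => if EqvGen rG w t then v else u
  intro x y
  refine (h (.inl x) (.inl y)).apply_of_equivalence (f := π) (EqvGen.is_equivalence rH) ?_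
  rintro _ _ ((⟨rfl, rfl⟩ | ⟨rfl, rfl⟩) | (⟨hxy⟩ | ⟨hxy⟩))
  · simpa [π, hst] using .refl _
  · simpa [π, if_pos (EqvGen.refl (r := rG) t)] using .refl _
  · exact .rel _ _ hxy
  · have hxy := EqvGen.rel _ _ hxy
    have : EqvGen rG _ t ↔ EqvGen rG _ t := ⟨(hxy.symm.trans _ _ _ ·), (hxy.trans _ _ _ ·)⟩
    simpa [π, this] using .refl _

theorem relConnected_sup_of_relConnected_glue (h : RelConnected R) :
    RelConnected (rH ⊔ fun a b => s(u, v) = s(a, b)) := by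
  let π : α ⊕ β → α := Sum.elim id fun _ => u
  intro x y
  refine (h (.inl x) (.inl y)).apply_of_equivalence (f := π) (EqvGen.is_equivalence _) ?_
  rintro _ _ ((⟨rfl, rfl⟩ | ⟨rfl, rfl⟩) | (⟨hxy⟩ | ⟨hxy⟩))
  · exact .refl _
  · exact .rel _ _ (Or.inr Sym2.eq_swap)
  · exact .rel _ _ (Or.inl hxy)
  · exact .refl _

theorem eqvGen_glue_inl {x y : α} (h : EqvGen rH x y) : EqvGen R (.inl x) (.inl y) :=
  h.map (f := Sum.inl) fun _ _ h => Or.inr (Sum.LiftRel.inl h)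

theorem eqvGen_glue_inr {x y : β} (h : EqvGen rG x y) : EqvGen R (.inr x) (.inr y) :=
  h.map (f := Sum.inr) fun _ _ h => Or.inr (Sum.LiftRel.inr h)

theorem relConnected_glue_of_split (hsplit : ∀ w, EqvGen rG w s ∨ EqvGen rG w t)
    (hH : RelConnected rH) : RelConnected R := by
  have hu : EqvGen R (.inl u) (.inr s) := .rel _ _ (Or.inl (Or.inl ⟨rfl, rfl⟩))
  have hv : EqvGen R (.inl v) (.inr t) := .rel _ _ (Or.inl (Or.inr ⟨rfl, rfl⟩))
  have toU : ∀ a, EqvGen R a (.inl u)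
    | .inl x => eqvGen_glue_inl (hH x u)
    | .inr w => (hsplit w).elim (fun hw => (eqvGen_glue_inr hw).trans _ _ _ hu.symm)
        fun hw => ((eqvGen_glue_inr hw).trans _ _ _ hv.symm).trans _ _ _
          (eqvGen_glue_inl (hH v u))
  exact fun a b => (toU a).trans _ _ _ (toU b).symm

theorem relConnected_glue_of_relConnected (hG : RelConnected rG)
    (hH : RelConnected (rH ⊔ fun a b => s(u, v) = s(a, b))) : RelConnected R := by
  have hu : EqvGen R (.inl u) (.inr s) := .rel _ _ (Or.inl (Or.inl ⟨rfl, rfl⟩))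
  have hv : EqvGen R (.inl v) (.inr t) := .rel _ _ (Or.inl (Or.inr ⟨rfl, rfl⟩))
  have huv : EqvGen R (.inl u) (.inl v) :=
    (hu.trans _ _ _ (eqvGen_glue_inr (hG s t))).trans _ _ _ hv.symm
  have liftH : ∀ x y, EqvGen R (.inl x) (.inl y) := fun x y =>
    (hH x y).apply_of_equivalence (EqvGen.is_equivalence _) fun
      | _, _, .inl h => eqvGen_glue_inl (.rel _ _ h)
      | _, _, .inr h => by
        rcases Sym2.eq_iff.1 h with ⟨rfl, rfl⟩ | ⟨rfl, rfl⟩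
        exacts [huv, huv.symm]
  have toU : ∀ a, EqvGen R a (.inl u)
    | .inl x => liftH x u
    | .inr w => (eqvGen_glue_inr (hG w s)).trans _ _ _ hu.symm
  exact fun a b => (toU a).trans _ _ _ (toU b).symm

theorem relConnected_glue_iff :
    RelConnected R ↔
      ((∀ w, Xor (EqvGen rG w s) (EqvGen rG w t)) ∧ RelConnected rH) ∨
        (RelConnected rG ∧ RelConnected (rH ⊔ fun a b => s(u, v) = s(a, b))) := by
  constructor
  · intro h
    have hST := eqvGen_or_eqvGen_of_relConnected_glue h
    by_cases hst : EqvGen rG s t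
    · have toS : ∀ w, EqvGen rG w s := fun w => (hST w).elim id (·.trans _ _ _ hst.symm)
      exact .inr ⟨fun w z => (toS w).trans _ _ _ (toS z).symm,
        relConnected_sup_of_relConnected_glue h⟩
    · refine .inl ⟨fun w => ?_, relConnected_of_relConnected_glue_of_not_eqvGen h hst⟩
      exact (hST w).imp (fun hs => ⟨hs, fun ht => hst (hs.symm.trans _ _ _ ht)⟩)
        fun ht => ⟨ht, fun hs => hst (hs.symm.trans _ _ _ ht)⟩
  · rintro (⟨hsplit, hH⟩ | ⟨hG, hH⟩)
    · exact relConnected_glue_of_split (fun w => Xor.or (hsplit w)) hH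
    · exact relConnected_glue_of_relConnected hG hH

end Glue

namespace Multigraph

variable (M : Multigraph)

theorem graphOf_eq_fromEdgeSet (A : Finset M.E) :
    M.graphOf A = SimpleGraph.fromEdgeSet (M.ends '' A) := by
  ext x y
  simp [graphOf, and_comm, eq_comm]

theorem reachable_graphOf_iff (A : Finset M.E) {x y : M.V} :
    (M.graphOf A).Reachable x y ↔ EqvGen (Sym2.ToRel (M.ends '' A)) x y := by
  rw [graphOf_eq_fromEdgeSet, SimpleGraph.reachable_fromEdgeSet_eq_reflTransGen_toRel,
    EqvGen.eqvGen_eq_reflTransGen]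

theorem connected_graphOf_iff (A : Finset M.E) :
    (M.graphOf A).Connected ↔ Nonempty M.V ∧ RelConnected (Sym2.ToRel (M.ends '' A)) := by
  rw [SimpleGraph.connected_iff, and_comm]
  simp only [SimpleGraph.Preconnected, reachable_graphOf_iff, RelConnected]

variable (e : M.E)

theorem connected_delete_graphOf_iff (B : Finset {e' // e' ≠ e}) :
    ((M.delete e).graphOf B).Connected ↔
      Nonempty M.V ∧ RelConnected (Sym2.ToRel (M.ends '' (B.map (.subtype _)))) := by
  refine (connected_graphOf_iff _ _).trans ?_
  rw [Finset.coe_map, Set.image_image]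
  rfl

theorem connected_contract_graphOf_iff (B : Finset {e' // e' ≠ e}) :
    ((M.contract e).graphOf B).Connected ↔
      Nonempty M.V ∧ RelConnected
        ((fun a b => M.ends e = s(a, b)) ⊔ Sym2.ToRel (M.ends '' (B.map (.subtype _)))) := by
  refine (connected_graphOf_iff _ _).trans
    (and_congr ⟨fun ⟨a⟩ => ⟨a.out⟩, fun ⟨x⟩ => ⟨Quot.mk _ x⟩⟩ ?_)
  rw [← relConnected_map_quot_mk_iff, ← Sym2.toRel_image_map, Finset.coe_map, Set.image_image,
    Set.image_image]
  rfl

theorem connected_contract_graphOf_iff_insert (B : Finset {e' // e' ≠ e}) :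
    ((M.contract e).graphOf B).Connected ↔
      (M.graphOf (insert e (B.map (.subtype _)))).Connected := by
  rw [connected_contract_graphOf_iff, connected_graphOf_iff, Finset.coe_insert,
    Set.image_insert_eq, Sym2.toRel_insert]

end Multigraph

theorem TTGraph.not_isSplit_of_connected (G : TTGraph) {A : Finset G.toMultigraph.E}
    (h : (G.toMultigraph.graphOf A).Connected) : ¬G.IsSplit A := fun hsplit =>
  (hsplit G.s).elim (fun ⟨_, hst⟩ => hst (h.preconnected _ _)) fun ⟨_, hss⟩ => hss (.refl _)

namespace Multigraph

variable (H : Multigraph) (e : H.E) (u v : H.V) (G : TTGraph)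

theorem connected_substEdge_graphOf_iff_relConnected (A₁ : Finset {e' // e' ≠ e})
    (A₂ : Finset G.toMultigraph.E) :
    ((H.substEdge e u v G).graphOf (A₁.disjSum A₂)).Connected ↔
      RelConnected (glueRel u v G.s G.t ⊔
        Sum.LiftRel (Sym2.ToRel (H.ends '' (A₁.map (.subtype _))))
          (Sym2.ToRel (G.ends '' A₂))) := by
  refine (connected_graphOf_iff _ _).trans ((and_iff_right ⟨Quot.mk _ (.inl u)⟩).trans ?_)
  rw [← Relation.map_inl_sup_map_inr, ← Sym2.toRel_image_map, ← Sym2.toRel_image_map,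
    ← Sym2.toRel_union, ← relConnected_map_quot_mk_iff, ← Sym2.toRel_image_map]
  congr! 2
  ext z
  constructor
  · rintro ⟨e' | f, he, rfl⟩
    · exact ⟨_, .inl ⟨_, ⟨_, Finset.mem_map_of_mem _ (Finset.inl_mem_disjSum.1 he), rfl⟩,
        rfl⟩, Sym2.map_map _⟩
    · exact ⟨_, .inr ⟨_, ⟨f, Finset.inr_mem_disjSum.1 he, rfl⟩, rfl⟩, Sym2.map_map _⟩
  · rintro ⟨_, ⟨_, ⟨_, he, rfl⟩, rfl⟩ | ⟨_, ⟨f, he, rfl⟩, rfl⟩, rfl⟩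
    · obtain ⟨e', he', rfl⟩ := Finset.mem_map.1 he
      exact ⟨.inl e', Finset.inl_mem_disjSum.2 he', (Sym2.map_map _).symm⟩
    · exact ⟨.inr f, Finset.inr_mem_disjSum.2 he, (Sym2.map_map _).symm⟩

theorem connected_substEdge_graphOf_iff (hends : H.ends e = s(u, v))
    (A₁ : Finset {e' // e' ≠ e}) (A₂ : Finset G.toMultigraph.E) :
    ((H.substEdge e u v G).graphOf (A₁.disjSum A₂)).Connected ↔
      (G.IsSplit A₂ ∧ ((H.delete e).graphOf A₁).Connected) ∨
        ((G.toMultigraph.graphOf A₂).Connected ∧ ((H.contract e).graphOf A₁).Connected) := by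
  rw [connected_substEdge_graphOf_iff_relConnected, relConnected_glue_iff,
    connected_delete_graphOf_iff, connected_graphOf_iff, connected_contract_graphOf_iff, ← hends]
  simp only [TTGraph.IsSplit, reachable_graphOf_iff, sup_comm, Xor',
    and_iff_right (⟨u⟩ : Nonempty H.V), and_iff_right (⟨G.s⟩ : Nonempty G.V)]

end Multigraph

section Counting

theorem ite_mul_eq_add_of_iff {M : Type*} [NonUnitalNonAssocSemiring M] {T P Q R S : Prop}
    [Decidable T] [Decidable P] [Decidable Q] [Decidable R] [Decidable S]
    (hT : T ↔ P ∧ Q ∨ R ∧ S) (hPR : ¬(P ∧ R)) (a b : M) :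
    (if T then a * b else 0) =
      (if P then a else 0) * (if Q then b else 0) +
        (if R then a else 0) * (if S then b else 0) := by
  simp only [hT]
  split_ifs <;> simp_all


variable {E F : Type*} [Fintype E] [Fintype F]

theorem Fintype.sum_finset_eq_sum_subtype_ne {M : Type*} [AddCommMonoid M] (e : E)
    (f : Finset E → M) :
    ∑ A, f A = ∑ B : Finset {x // x ≠ e},
      (f (B.map (.subtype _)) + f (insert e (B.map (.subtype _)))) := by
  have map_subtype (A : Finset E) : (A.subtype (· ≠ e)).map (.subtype _) = A.erase e := by
    rw [Finset.subtype_map, Finset.filter_ne']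
  rw [Finset.sum_add_distrib, ← Finset.sum_filter_not_add_sum_filter _ (e ∈ ·)]
  congr 1
  · refine Finset.sum_nbij' (fun A => A.subtype (· ≠ e)) (fun B => B.map (.subtype _))
      (by simp) (by simp) (fun A hA => ?_) (fun B _ => by ext x; simp [x.2]) (fun A hA => ?_) <;>
    rw [map_subtype, Finset.erase_eq_of_notMem (by simpa using hA)]
  · refine Finset.sum_nbij' (fun A => A.subtype (· ≠ e))
      (fun B => insert e (B.map (.subtype _)))
      (by simp) (by simp) (fun A hA => ?_) (fun B _ => by ext x; simp [x.2]) (fun A hA => ?_) <;>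
    rw [map_subtype, Finset.insert_erase (by simpa using hA)]

theorem Fintype.sum_finset_sum_type {M : Type*} [AddCommMonoid M] (f : Finset (E ⊕ F) → M) :
    ∑ A, f A = ∑ B₁ : Finset E, ∑ B₂ : Finset F, f (B₁.disjSum B₂) := by
  rw [← Fintype.sum_prod_type']
  exact Fintype.sum_equiv Finset.sumEquiv.toEquiv _ _ fun A => by
    simp [Finset.toLeft_disjSum_toRight]

noncomputable def relWeight (p : ℂ) (A : Finset E) : ℂ :=
  (1 - p) ^ A.card * p ^ (Fintype.card E - A.card)

theorem relWeight_disjSum (p : ℂ) (B₁ : Finset E) (B₂ : Finset F) :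
    relWeight p (B₁.disjSum B₂) = relWeight p B₁ * relWeight p B₂ := by
  have h₁ := B₁.card_le_univ
  have h₂ := B₂.card_le_univ
  rw [relWeight, relWeight, relWeight, Finset.card_disjSum, Fintype.card_sum,
    show Fintype.card E + Fintype.card F - (B₁.card + B₂.card) =
      (Fintype.card E - B₁.card) + (Fintype.card F - B₂.card) by omega]
  ring

theorem Fintype.card_subtype_ne_add_one (e : E) :
    Fintype.card {x // x ≠ e} + 1 = Fintype.card E := by
  rw [← Fintype.card_option, Fintype.card_congr (Equiv.optionSubtypeNe e)]

theorem relWeight_map_subtype_ne (p : ℂ) (e : E) (B : Finset {x // x ≠ e}) :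
    relWeight p (B.map (.subtype _)) = p * relWeight p B := by
  have := B.card_le_univ
  rw [relWeight, relWeight, Finset.card_map, ← Fintype.card_subtype_ne_add_one e,
    Nat.sub_add_comm this, pow_succ]
  ring

theorem relWeight_insert_map_subtype_ne (p : ℂ) (e : E) (B : Finset {x // x ≠ e}) :
    relWeight p (insert e (B.map (.subtype _))) = (1 - p) * relWeight p B := by
  rw [relWeight, relWeight, Finset.card_insert_of_notMem (by simp), Finset.card_map,
    ← Fintype.card_subtype_ne_add_one e, Nat.add_sub_add_right, pow_succ]
  ring

end Counting

namespace Multigraph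

theorem rel_eq_sum_relWeight (M : Multigraph) (p : ℂ) :
    M.rel p = ∑ A, if (M.graphOf A).Connected then relWeight p A else 0 :=
  rfl

theorem rel_eq_delete_add_contract (M : Multigraph) (e : M.E) (p : ℂ) :
    M.rel p = p * (M.delete e).rel p + (1 - p) * (M.contract e).rel p := by
  rw [rel_eq_sum_relWeight, Fintype.sum_finset_eq_sum_subtype_ne e, Finset.sum_add_distrib,
    rel_eq_sum_relWeight, rel_eq_sum_relWeight, Finset.mul_sum, Finset.mul_sum]
  congr 1 <;> refine Finset.sum_congr rfl fun B _ => ?_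
  · rw [relWeight_map_subtype_ne, mul_ite, mul_zero,
      (connected_graphOf_iff _ _).trans (connected_delete_graphOf_iff _ _ _).symm]
    rfl
  · rw [relWeight_insert_map_subtype_ne, mul_ite, mul_zero,
      ← connected_contract_graphOf_iff_insert]
    rfl

end Multigraph

theorem Multigraph.rel_substEdge (H : Multigraph) (e : H.E) (u v : H.V)
    (hends : H.ends e = s(u, v)) (G : TTGraph) (p : ℂ) :
    (H.substEdge e u v G).rel p =
      G.split p * (H.delete e).rel p + G.rel p * (H.contract e).rel p := by
  have hsplit : G.split p = ∑ A, if G.IsSplit A then relWeight p A else 0 := rfl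
  rw [rel_eq_sum_relWeight, hsplit, TTGraph.rel, rel_eq_sum_relWeight, rel_eq_sum_relWeight,
    rel_eq_sum_relWeight, Finset.sum_mul_sum, Finset.sum_mul_sum, ← Finset.sum_add_distrib]
  refine (Fintype.sum_finset_sum_type _).trans
    (Finset.sum_comm.trans (Finset.sum_congr rfl fun B₂ _ => ?_))
  refine Eq.trans ?_ Finset.sum_add_distrib
  refine Finset.sum_congr rfl fun B₁ _ => ?_
  rw [show relWeight (E := (H.substEdge e u v G).E) p (B₁.disjSum B₂) =
      relWeight p B₂ * relWeight p B₁ from (relWeight_disjSum p B₁ B₂).trans (mul_comm _ _)]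
  exact ite_mul_eq_add_of_iff (connected_substEdge_graphOf_iff H e u v G hends B₁ B₂)
    (fun h => G.not_isSplit_of_connected h.2 h.1) _ _

/-- If `R(G;p) ≠ 0` then
`((1-p)/R(G;p))·R(H(G)_e;p) = R(H;p) + (y_G(p) − (p+1))·R(H∖e;p)`,
where `y_G(p) = (1-p)S(G;p)/R(G;p) + 1`. -/
theorem rel_substEdge_yEff (H : Multigraph) (e : H.E) (u v : H.V)
    (hends : H.ends e = s(u, v)) (G : TTGraph) (p : ℂ) (hR : G.rel p ≠ 0) :
    ((1 - p) / G.rel p) * (H.substEdge e u v G).rel p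
      = H.rel p + (G.yEff p - (p + 1)) * (H.delete e).rel p := by
  rw [H.rel_substEdge e u v hends G p, H.rel_eq_delete_add_contract e p, TTGraph.yEff]
  field_simp
  ring
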